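/- arXiv:0707.1519 — 2 statements merged into one kernel-verified Lean document; each statement's English description precedes it below -/
import Mathlib

section
/- Let L be a regular Lagrangian on TM with Hessian metric g_{ij} = (1/2)∂²L/∂y^i∂y^j, canonical nonlinear connection N^i_j = ∂G^i/∂y^j, canonical 1-form ω = (1/2)(∂L/∂y^i) dx^i, and canonical 2-form θ = g_{ij} ẽ^i ∧ dx^j (with ẽ^i = dy^i + N^i_k dx^k). Then dω = θ; in particular θ is closed, so (TM, g, J) is an almost Kähler manifold. -/
noncomputable section

abbrev E (n : ℕ) := (Fin n → ℝ) × (Fin n → ℝ)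

def pdx {n : ℕ} (i : Fin n) (f : E n → ℝ) (u : E n) : ℝ :=
  fderiv ℝ f u (Pi.single i 1, 0)

def pdy {n : ℕ} (i : Fin n) (f : E n → ℝ) (u : E n) : ℝ :=
  fderiv ℝ f u (0, Pi.single i 1)

/-- Hessian metric `g_{ij} = (1/2) ∂²L/∂y^i∂y^j`. -/
def hess {n : ℕ} (L : E n → ℝ) (u : E n) (i j : Fin n) : ℝ :=
  (1 / 2) * pdy i (pdy j L) u

/-- Semi-spray coefficients `G^k`. -/
def semispray {n : ℕ} (L : E n → ℝ) (ginv : E n → Fin n → Fin n → ℝ)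
    (k : Fin n) (u : E n) : ℝ :=
  (1 / 4) * ∑ j, ginv u k j * ((∑ i, u.2 i * pdx i (pdy j L) u) - pdx j L u)

/-- Canonical nonlinear connection `N^i_j = ∂G^i/∂y^j`. -/
def Ncan {n : ℕ} (L : E n → ℝ) (ginv : E n → Fin n → Fin n → ℝ)
    (i j : Fin n) (u : E n) : ℝ :=
  pdy j (semispray L ginv i) u

/-- The adapted coframe element `ẽ^i = dy^i + N^i_k dx^k` evaluated on a tangent vector. -/
def etil {n : ℕ} (L : E n → ℝ) (ginv : E n → Fin n → Fin n → ℝ)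
    (u : E n) (i : Fin n) (X : E n) : ℝ :=
  X.2 i + ∑ k, Ncan L ginv i k u * X.1 k

/-- Canonical 1-form `ω = (1/2)(∂L/∂y^i) dx^i`. -/
def omega1 {n : ℕ} (L : E n → ℝ) (u : E n) (X : E n) : ℝ :=
  (1 / 2) * ∑ i, pdy i L u * X.1 i

/-- Canonical 2-form `θ = g_{ij} ẽ^i ∧ dx^j`. -/
def theta2 {n : ℕ} (L : E n → ℝ) (ginv : E n → Fin n → Fin n → ℝ)
    (u : E n) (X Y : E n) : ℝ :=
  ∑ i, ∑ j, hess L u i j * (etil L ginv u i X * Y.1 j - etil L ginv u i Y * X.1 j)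

variable {n : ℕ}

/-! ### Auxiliary infrastructure -/


lemma fd_smooth {f : E n → ℝ} (hf : ContDiff ℝ (⊤ : ℕ∞) f) (v : E n) :
    ContDiff ℝ (⊤ : ℕ∞) (fun u => fderiv ℝ f u v) :=
  (hf.fderiv_right (by simp)).clm_apply contDiff_const

lemma fd_swap {f : E n → ℝ} (hf : ContDiff ℝ (⊤ : ℕ∞) f) (u v w : E n) :
    fderiv ℝ (fun x => fderiv ℝ f x w) u v = fderiv ℝ (fun x => fderiv ℝ f x v) u w := by
  have hsymm : IsSymmSndFDerivAt ℝ f u := by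
    apply (hf.contDiffAt).isSymmSndFDerivAt
    rw [minSmoothness_of_isRCLikeNormedField]
    exact (WithTop.coe_le_coe.mpr (le_top : (2 : ℕ∞) ≤ ⊤) : ((2 : ℕ∞) : WithTop ℕ∞) ≤ _)
  have hd : DifferentiableAt ℝ (fderiv ℝ f) u :=
    ((hf.fderiv_right (m := (⊤ : ℕ∞)) (by simp)).differentiable (by simp)).differentiableAt
  have key : ∀ z : E n, fderiv ℝ (fun x => fderiv ℝ f x z) u
      = (fderiv ℝ (fderiv ℝ f) u).flip z := by
    intro z
    have := fderiv_clm_apply (c := fderiv ℝ f) (u := fun _ : E n => z) hd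
      (differentiableAt_const z)
    simpa using this
  rw [key w, key v]
  exact hsymm w v |>.symm ▸ (hsymm v w)

lemma pdx_smooth {f : E n → ℝ} (hf : ContDiff ℝ (⊤ : ℕ∞) f) (i : Fin n) :
    ContDiff ℝ (⊤ : ℕ∞) (pdx i f) := fd_smooth hf _

lemma pdy_smooth {f : E n → ℝ} (hf : ContDiff ℝ (⊤ : ℕ∞) f) (i : Fin n) :
    ContDiff ℝ (⊤ : ℕ∞) (pdy i f) := fd_smooth hf _

lemma decompX (X : E n) :
    X = (∑ k, X.1 k • (((Pi.single k 1 : Fin n → ℝ), (0 : Fin n → ℝ)) : E n))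
      + ∑ k, X.2 k • (((0 : Fin n → ℝ), (Pi.single k 1 : Fin n → ℝ)) : E n) := by
  ext j
  · simp [Prod.fst_sum, Prod.snd_sum, Finset.sum_apply, Pi.single_apply, mul_comm]
  · simp [Prod.fst_sum, Prod.snd_sum, Finset.sum_apply, Pi.single_apply, mul_comm]

/-- Evaluation of a derivative along an arbitrary direction in terms of partials. -/
lemma fd_apply (f : E n → ℝ) (u X : E n) :
    fderiv ℝ f u X = (∑ k, X.1 k * pdx k f u) + ∑ k, X.2 k * pdy k f u := by
  conv_lhs => rw [decompX X]
  rw [map_add, map_sum, map_sum]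
  refine congrArg₂ (· + ·) (Finset.sum_congr rfl fun k _ => ?_)
    (Finset.sum_congr rfl fun k _ => ?_)
  · rw [map_smul]; rfl
  · rw [map_smul]; rfl

lemma fd_sum {ι : Type*} (s : Finset ι) (f : ι → E n → ℝ) (u v : E n)
    (hf : ∀ i ∈ s, DifferentiableAt ℝ (f i) u) :
    fderiv ℝ (fun x => ∑ i ∈ s, f i x) u v = ∑ i ∈ s, fderiv ℝ (f i) u v := by
  rw [fderiv_fun_sum hf]; simp

lemma fd_const_mul (c : ℝ) (f : E n → ℝ) (u v : E n) (hf : DifferentiableAt ℝ f u) :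
    fderiv ℝ (fun x => c * f x) u v = c * fderiv ℝ f u v := by
  rw [fderiv_const_mul hf]; simp

lemma fd_mul_const (c : ℝ) (f : E n → ℝ) (u v : E n) (hf : DifferentiableAt ℝ f u) :
    fderiv ℝ (fun x => f x * c) u v = fderiv ℝ f u v * c := by
  rw [fderiv_mul_const hf]; simp [mul_comm]

lemma fd_mul (f g : E n → ℝ) (u v : E n) (hf : DifferentiableAt ℝ f u)
    (hg : DifferentiableAt ℝ g u) :
    fderiv ℝ (fun x => f x * g x) u v
      = fderiv ℝ f u v * g u + f u * fderiv ℝ g u v := by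
  rw [fderiv_fun_mul hf hg]; simp; ring

lemma fd_sub (f g : E n → ℝ) (u v : E n) (hf : DifferentiableAt ℝ f u)
    (hg : DifferentiableAt ℝ g u) :
    fderiv ℝ (fun x => f x - g x) u v = fderiv ℝ f u v - fderiv ℝ g u v := by
  rw [fderiv_fun_sub hf hg]; simp

lemma fd_coord2 (m : Fin n) (u v : E n) :
    fderiv ℝ (fun x : E n => x.2 m) u v = v.2 m := by
  have : (fun x : E n => x.2 m)
      = (ContinuousLinearMap.proj m).comp (ContinuousLinearMap.snd ℝ (Fin n → ℝ) (Fin n → ℝ)) := rfl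
  rw [this, ContinuousLinearMap.fderiv]
  rfl

lemma diff_coord2 (m : Fin n) (u : E n) : DifferentiableAt ℝ (fun x : E n => x.2 m) u :=
  (((ContinuousLinearMap.proj m).comp
    (ContinuousLinearMap.snd ℝ (Fin n → ℝ) (Fin n → ℝ))).differentiable).differentiableAt

lemma smooth_coord2 (m : Fin n) : ContDiff ℝ (⊤ : ℕ∞) (fun x : E n => x.2 m) :=
  ((ContinuousLinearMap.proj m).comp
    (ContinuousLinearMap.snd ℝ (Fin n → ℝ) (Fin n → ℝ))).contDiff

/-! ### Commutation of partial derivatives -/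

lemma pdy_pdy_comm {f : E n → ℝ} (hf : ContDiff ℝ (⊤ : ℕ∞) f) (i j : Fin n) (u : E n) :
    pdy i (pdy j f) u = pdy j (pdy i f) u :=
  fd_swap hf u _ _

lemma pdy_pdx_comm {f : E n → ℝ} (hf : ContDiff ℝ (⊤ : ℕ∞) f) (i j : Fin n) (u : E n) :
    pdy i (pdx j f) u = pdx j (pdy i f) u :=
  fd_swap hf u _ _

/-- third-order symmetry in the `y` variables -/
lemma T3_symm {f : E n → ℝ} (hf : ContDiff ℝ (⊤ : ℕ∞) f) (k i j : Fin n) (u : E n) :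
    pdy k (pdy i (pdy j f)) u = pdy j (pdy i (pdy k f)) u := by
  have h1 : pdy i (pdy j f) = pdy j (pdy i f) := funext fun x => pdy_pdy_comm hf i j x
  have h2 : pdy k (pdy i f) = pdy i (pdy k f) := funext fun x => pdy_pdy_comm hf k i x
  rw [h1, pdy_pdy_comm (pdy_smooth hf i) k j u, h2]

/-- mixed third-order symmetry -/
lemma S_symm {f : E n → ℝ} (hf : ContDiff ℝ (⊤ : ℕ∞) f) (k m j : Fin n) (u : E n) :
    pdy k (pdx m (pdy j f)) u = pdy j (pdx m (pdy k f)) u := by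
  have h1 : pdx m (pdy j f) = pdy j (pdx m f) := funext fun x => (pdy_pdx_comm hf j m x).symm
  have h2 : pdy k (pdx m f) = pdx m (pdy k f) := funext fun x => pdy_pdx_comm hf k m x
  rw [h1, pdy_pdy_comm (pdx_smooth hf m) k j u, h2]




/-- The lowered semispray source `Θ_j`. -/
def Th {n : ℕ} (L : E n → ℝ) (j : Fin n) (u : E n) : ℝ :=
  (∑ m, u.2 m * pdx m (pdy j L) u) - pdx j L u

variable {L : E n → ℝ} {ginv : E n → Fin n → Fin n → ℝ}

lemma semispray_eq (k : Fin n) (u : E n) :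
    semispray L ginv k u = (1 / 4) * ∑ j, ginv u k j * Th L j u := rfl

lemma hess_symm (hL : ContDiff ℝ (⊤ : ℕ∞) L) (u : E n) (i j : Fin n) :
    hess L u i j = hess L u j i := by
  unfold hess; rw [pdy_pdy_comm hL i j u]

lemma Th_smooth (hL : ContDiff ℝ (⊤ : ℕ∞) L) (j : Fin n) : ContDiff ℝ (⊤ : ℕ∞) (Th L j) := by
  unfold Th
  exact (ContDiff.sum fun m _ =>
    (smooth_coord2 m).mul (pdx_smooth (pdy_smooth hL j) m)).sub (pdx_smooth hL j)

lemma semispray_smooth (hL : ContDiff ℝ (⊤ : ℕ∞) L)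
    (hginvsm : ∀ k i, ContDiff ℝ (⊤ : ℕ∞) fun u => ginv u k i) (k : Fin n) :
    ContDiff ℝ (⊤ : ℕ∞) (semispray L ginv k) := by
  have : semispray L ginv k = fun u => (1 / 4) * ∑ j, ginv u k j * Th L j u := rfl
  rw [this]
  exact contDiff_const.mul (ContDiff.sum fun j _ => (hginvsm k j).mul (Th_smooth hL j))

lemma hess_fun_smooth (hL : ContDiff ℝ (⊤ : ℕ∞) L) (i j : Fin n) :
    ContDiff ℝ (⊤ : ℕ∞) (fun u => hess L u i j) :=
  contDiff_const.mul (pdy_smooth (pdy_smooth hL j) i)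

/-- Contraction identity: `∑_i g_{ij} G^i = (1/4) Θ_j`. -/
lemma contr (hL : ContDiff ℝ (⊤ : ℕ∞) L)
    (hginv' : ∀ u k i, ∑ j, hess L u k j * ginv u j i = if k = i then (1 : ℝ) else 0)
    (u : E n) (j : Fin n) :
    ∑ i, hess L u i j * semispray L ginv i u = (1 / 4) * Th L j u := by
  have step : ∀ i, hess L u i j * semispray L ginv i u
      = ∑ l, (1 / 4) * ((hess L u j i * ginv u i l) * Th L l u) := by
    intro i
    rw [semispray_eq, hess_symm hL u i j, Finset.mul_sum, Finset.mul_sum]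
    exact Finset.sum_congr rfl fun l _ => by ring
  rw [Finset.sum_congr rfl fun i _ => step i, Finset.sum_comm]
  have : ∀ l, (∑ i, (1 / 4) * ((hess L u j i * ginv u i l) * Th L l u))
      = (1 / 4) * ((if j = l then (1:ℝ) else 0) * Th L l u) := by
    intro l
    rw [← hginv' u j l]
    rw [Finset.sum_mul, Finset.mul_sum]
  rw [Finset.sum_congr rfl fun l _ => this l]
  simp

lemma pdy_const_mul (c : ℝ) (f : E n → ℝ) (u : E n) (k : Fin n)
    (hf : DifferentiableAt ℝ f u) :
    pdy k (fun x => c * f x) u = c * pdy k f u :=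
  fd_const_mul c f u _ hf

lemma M_eq (hL : ContDiff ℝ (⊤ : ℕ∞) L)
    (hginv' : ∀ u k i, ∑ j, hess L u k j * ginv u j i = if k = i then (1 : ℝ) else 0)
    (hginvsm : ∀ k i, ContDiff ℝ (⊤ : ℕ∞) fun u => ginv u k i)
    (u : E n) (k j : Fin n) :
    ∑ i, hess L u i j * Ncan L ginv i k u
      = (1 / 4) * pdy k (Th L j) u
        - ∑ i, pdy k (fun x => hess L x i j) u * semispray L ginv i u := by
  have hdh : ∀ i, DifferentiableAt ℝ (fun x => hess L x i j) u := fun i =>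
    ((hess_fun_smooth hL i j).differentiable (by simp)).differentiableAt
  have hdG : ∀ i, DifferentiableAt ℝ (semispray L ginv i) u := fun i =>
    ((semispray_smooth hL hginvsm i).differentiable (by simp)).differentiableAt
  have hfun : (fun x => ∑ i, hess L x i j * semispray L ginv i x)
      = fun x => (1 / 4) * Th L j x := funext fun x => contr hL hginv' x j
  have hcongr := congrArg
    (fun f : E n → ℝ => fderiv ℝ f u ((0 : Fin n → ℝ), Pi.single k 1)) hfun
  try simp only at hcongr
  rw [fd_sum Finset.univ (fun i x => hess L x i j * semispray L ginv i x) u _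
        (fun i _ => (hdh i).mul (hdG i)),
      fd_const_mul (1 / 4) (Th L j) u _
        ((Th_smooth hL j).differentiable (by simp)).differentiableAt] at hcongr
  have hterm : ∀ i, fderiv ℝ (fun x => hess L x i j * semispray L ginv i x) u
        ((0 : Fin n → ℝ), Pi.single k 1)
      = pdy k (fun x => hess L x i j) u * semispray L ginv i u
        + hess L u i j * Ncan L ginv i k u := by
    intro i
    rw [fd_mul _ _ u _ (hdh i) (hdG i)]; rfl
  rw [Finset.sum_congr rfl fun i _ => hterm i, Finset.sum_add_distrib] at hcongr
  have hpd : pdy k (Th L j) u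
      = fderiv ℝ (Th L j) u ((0 : Fin n → ℝ), Pi.single k 1) := rfl
  rw [hpd]
  linarith [hcongr]

lemma pdy_Th (hL : ContDiff ℝ (⊤ : ℕ∞) L) (u : E n) (k j : Fin n) :
    pdy k (Th L j) u
      = pdx k (pdy j L) u + (∑ m, u.2 m * pdy k (pdx m (pdy j L)) u)
          - pdx j (pdy k L) u := by
  have hd1 : ∀ (m : Fin n), DifferentiableAt ℝ (fun x : E n => x.2 m * pdx m (pdy j L) x) u :=
    fun m => (diff_coord2 m u).mul
      ((pdx_smooth (pdy_smooth hL j) m).differentiable (by simp)).differentiableAt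
  have hds : DifferentiableAt ℝ (fun x : E n => ∑ m, x.2 m * pdx m (pdy j L) x) u :=
    DifferentiableAt.fun_sum fun m _ => hd1 m
  have hdx : DifferentiableAt ℝ (pdx j L) u :=
    ((pdx_smooth hL j).differentiable (by simp)).differentiableAt
  have h0 : pdy k (Th L j) u
      = fderiv ℝ (fun x : E n => (∑ m, x.2 m * pdx m (pdy j L) x) - pdx j L x) u
          ((0 : Fin n → ℝ), Pi.single k 1) := rfl
  rw [h0, fd_sub _ _ u _ hds hdx,
    fd_sum Finset.univ (fun m x => x.2 m * pdx m (pdy j L) x) u _ (fun m _ => hd1 m)]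
  have hterm : ∀ m, fderiv ℝ (fun x : E n => x.2 m * pdx m (pdy j L) x) u
        ((0 : Fin n → ℝ), Pi.single k 1)
      = ((Pi.single k 1 : Fin n → ℝ) m) * pdx m (pdy j L) u + u.2 m * pdy k (pdx m (pdy j L)) u := by
    intro m
    rw [fd_mul _ _ u _ (diff_coord2 m u)
      ((pdx_smooth (pdy_smooth hL j) m).differentiable (by simp)).differentiableAt,
      fd_coord2]
    rfl
  rw [Finset.sum_congr rfl fun m _ => hterm m, Finset.sum_add_distrib]
  have hsingle : (∑ m, ((Pi.single k 1 : Fin n → ℝ) m) * pdx m (pdy j L) u) = pdx k (pdy j L) u := by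
    simp [Pi.single_apply]
  have hlast : fderiv ℝ (pdx j L) u ((0 : Fin n → ℝ), Pi.single k 1)
      = pdx j (pdy k L) u := pdy_pdx_comm hL k j u
  rw [hsingle, hlast]

lemma M_antisymm (hL : ContDiff ℝ (⊤ : ℕ∞) L)
    (hginv' : ∀ u k i, ∑ j, hess L u k j * ginv u j i = if k = i then (1 : ℝ) else 0)
    (hginvsm : ∀ k i, ContDiff ℝ (⊤ : ℕ∞) fun u => ginv u k i)
    (u : E n) (k j : Fin n) :
    (∑ i, hess L u i j * Ncan L ginv i k u) - (∑ i, hess L u i k * Ncan L ginv i j u)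
      = (1 / 2) * (pdx k (pdy j L) u - pdx j (pdy k L) u) := by
  rw [M_eq hL hginv' hginvsm u k j, M_eq hL hginv' hginvsm u j k,
    pdy_Th hL u k j, pdy_Th hL u j k]
  have hS : (∑ m, u.2 m * pdy k (pdx m (pdy j L)) u)
      = ∑ m, u.2 m * pdy j (pdx m (pdy k L)) u :=
    Finset.sum_congr rfl fun m _ => by rw [S_symm hL k m j u]
  have hC : (∑ i, pdy k (fun x => hess L x i j) u * semispray L ginv i u)
      = ∑ i, pdy j (fun x => hess L x i k) u * semispray L ginv i u := by
    refine Finset.sum_congr rfl fun i _ => ?_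
    congr 1
    have e1 : (fun x => hess L x i j) = fun x => (1 / 2) * pdy i (pdy j L) x := rfl
    have e2 : (fun x => hess L x i k) = fun x => (1 / 2) * pdy i (pdy k L) x := rfl
    rw [e1, e2, pdy_const_mul _ _ u k
        ((pdy_smooth (pdy_smooth hL j) i).differentiable (by simp)).differentiableAt,
      pdy_const_mul _ _ u j
        ((pdy_smooth (pdy_smooth hL k) i).differentiable (by simp)).differentiableAt,
      T3_symm hL k i j u]
  rw [hS, hC]; ring


lemma lhs_eq (hL : ContDiff ℝ (⊤ : ℕ∞) L) (u X Y : E n) :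
    fderiv ℝ (fun w => omega1 L w Y) u X
      = (1 / 2) * ∑ i, ((∑ k, X.1 k * pdx k (pdy i L) u)
          + ∑ k, X.2 k * (2 * hess L u k i)) * Y.1 i := by
  have hdi : ∀ i : Fin n, DifferentiableAt ℝ (pdy i L) u := fun i =>
    ((pdy_smooth hL i).differentiable (by simp)).differentiableAt
  have h0 : (fun w => omega1 L w Y) = fun w => (1 / 2) * ∑ i, pdy i L w * Y.1 i := rfl
  rw [h0, fd_const_mul _ _ u X (DifferentiableAt.fun_sum fun i _ => (hdi i).mul_const _),
    fd_sum Finset.univ (fun i w => pdy i L w * Y.1 i) u X (fun i _ => (hdi i).mul_const _)]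
  refine congrArg ((1 : ℝ) / 2 * ·) (Finset.sum_congr rfl fun i _ => ?_)
  rw [fd_mul_const _ _ u X (hdi i), fd_apply]
  have : ∀ k, X.2 k * pdy k (pdy i L) u = X.2 k * (2 * hess L u k i) := fun k => by
    rw [show hess L u k i = (1 / 2) * pdy k (pdy i L) u from rfl]; ring
  rw [Finset.sum_congr rfl fun k _ => this k]

lemma alg_main (g A N M : Fin n → Fin n → ℝ) (a b c d : Fin n → ℝ)
    (hM : ∀ k j, M k j = ∑ i, g i j * N i k)
    (hkey : ∀ k j, M k j - M j k = (1 / 2) * (A k j - A j k)) :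
    (1 / 2) * (∑ i, ((∑ k, a k * A k i) + ∑ k, b k * (2 * g k i)) * c i)
      - (1 / 2) * (∑ i, ((∑ k, c k * A k i) + ∑ k, d k * (2 * g k i)) * a i)
    = ∑ i, ∑ j, g i j * ((b i + ∑ k, N i k * a k) * c j
        - (d i + ∑ k, N i k * c k) * a j) := by
  -- split a half-sum into A-part and g-part
  have hsplit : ∀ (p q : Fin n → ℝ),
      (1 / 2) * (∑ i, ((∑ k, p k * A k i) + ∑ k, q k * (2 * g k i)) * (fun r => r) 1 * 1) = 0 → True := fun _ _ _ => trivial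
  -- LHS expansion
  have hL1 : ∀ (p q r : Fin n → ℝ),
      (1 / 2) * (∑ i, ((∑ k, p k * A k i) + ∑ k, q k * (2 * g k i)) * r i)
        = (∑ i, ∑ k, (1 / 2) * (p k * A k i * r i)) + ∑ i, ∑ k, q k * g k i * r i := by
    intro p q r
    rw [Finset.mul_sum, ← Finset.sum_add_distrib]
    refine Finset.sum_congr rfl fun i _ => ?_
    rw [add_mul, mul_add, Finset.sum_mul, Finset.sum_mul, Finset.mul_sum, Finset.mul_sum]
    exact congrArg₂ (· + ·) (Finset.sum_congr rfl fun k _ => by ring)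
      (Finset.sum_congr rfl fun k _ => by ring)
  rw [hL1 a b c, hL1 c d a]
  -- g-parts
  have hg1 : (∑ i, ∑ k, b k * g k i * c i) = ∑ i, ∑ j, g i j * (b i * c j) := by
    rw [Finset.sum_comm]
    exact Finset.sum_congr rfl fun k _ => Finset.sum_congr rfl fun i _ => by ring
  have hg2 : (∑ i, ∑ k, d k * g k i * a i) = ∑ i, ∑ j, g i j * (d i * a j) := by
    rw [Finset.sum_comm]
    exact Finset.sum_congr rfl fun k _ => Finset.sum_congr rfl fun i _ => by ring
  -- A-parts
  have hA1 : (∑ i, ∑ k, (1 / 2) * (a k * A k i * c i))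
      = ∑ k, ∑ j, (1 / 2) * (a k * A k j * c j) := Finset.sum_comm
  -- second A-part is alpha-equal to the convenient form already
  have hA : (∑ k, ∑ j, (1 / 2) * (a k * A k j * c j))
        - (∑ i, ∑ k, (1 / 2) * (c k * A k i * a i))
      = ∑ k, ∑ j, (M k j - M j k) * (a k * c j) := by
    rw [← Finset.sum_sub_distrib]
    refine Finset.sum_congr rfl fun k _ => ?_
    rw [← Finset.sum_sub_distrib]
    refine Finset.sum_congr rfl fun j _ => ?_
    rw [hkey k j]; ring
  -- RHS expansion
  have hrhs : ∀ i j, g i j * ((b i + ∑ k, N i k * a k) * c j - (d i + ∑ k, N i k * c k) * a j)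
      = (g i j * (b i * c j) - g i j * (d i * a j))
        + ((∑ k, g i j * N i k * (a k * c j)) - ∑ k, g i j * N i k * (c k * a j)) := by
    intro i j
    have e1 : g i j * ((∑ k, N i k * a k) * c j) = ∑ k, g i j * N i k * (a k * c j) := by
      rw [Finset.sum_mul, Finset.mul_sum]
      exact Finset.sum_congr rfl fun k _ => by ring
    have e2 : g i j * ((∑ k, N i k * c k) * a j) = ∑ k, g i j * N i k * (c k * a j) := by
      rw [Finset.sum_mul, Finset.mul_sum]
      exact Finset.sum_congr rfl fun k _ => by ring
    calc g i j * ((b i + ∑ k, N i k * a k) * c j - (d i + ∑ k, N i k * c k) * a j)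
        = (g i j * (b i * c j) - g i j * (d i * a j))
          + (g i j * ((∑ k, N i k * a k) * c j) - g i j * ((∑ k, N i k * c k) * a j)) := by
          ring
      _ = _ := by rw [e1, e2]
  have hsum : (∑ i, ∑ j, g i j * ((b i + ∑ k, N i k * a k) * c j
        - (d i + ∑ k, N i k * c k) * a j))
      = ((∑ i, ∑ j, g i j * (b i * c j)) - ∑ i, ∑ j, g i j * (d i * a j))
        + ((∑ i, ∑ j, ∑ k, g i j * N i k * (a k * c j))
          - ∑ i, ∑ j, ∑ k, g i j * N i k * (c k * a j)) := by
    simp only [hrhs, Finset.sum_add_distrib, Finset.sum_sub_distrib]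
  -- triple sums to M
  have htr : ∀ (x y : Fin n → ℝ),
      (∑ i, ∑ j, ∑ k, g i j * N i k * (x k * y j)) = ∑ k, ∑ j, M k j * (x k * y j) := by
    intro x y
    calc (∑ i, ∑ j, ∑ k, g i j * N i k * (x k * y j))
        = ∑ i, ∑ k, ∑ j, g i j * N i k * (x k * y j) :=
          Finset.sum_congr rfl fun i _ => Finset.sum_comm
      _ = ∑ k, ∑ i, ∑ j, g i j * N i k * (x k * y j) := Finset.sum_comm
      _ = ∑ k, ∑ j, ∑ i, g i j * N i k * (x k * y j) :=
          Finset.sum_congr rfl fun k _ => Finset.sum_comm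
      _ = ∑ k, ∑ j, M k j * (x k * y j) := by
          refine Finset.sum_congr rfl fun k _ => Finset.sum_congr rfl fun j _ => ?_
          rw [hM k j, Finset.sum_mul]
  have hM2 : (∑ k, ∑ j, M k j * (c k * a j)) = ∑ k, ∑ j, M j k * (a k * c j) := by
    rw [Finset.sum_comm]
    exact Finset.sum_congr rfl fun k _ => Finset.sum_congr rfl fun j _ => by ring
  rw [hsum, htr a c, htr c a, hg1, hg2, hA1, hM2]
  rw [show (∑ k, ∑ j, M k j * (a k * c j)) - (∑ k, ∑ j, M j k * (a k * c j))
      = ∑ k, ∑ j, (M k j - M j k) * (a k * c j) by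
    rw [← Finset.sum_sub_distrib]
    exact Finset.sum_congr rfl fun k _ => by
      rw [← Finset.sum_sub_distrib]
      exact Finset.sum_congr rfl fun j _ => by ring]
  rw [← hA]
  ring

/-- `dω = θ` for the canonical 1-form and 2-form of a regular Lagrangian; here the
exterior derivative of the 1-form `ω` is evaluated on constant vector fields `X`, `Y`:
`dω(X,Y) = X(ω(Y)) − Y(ω(X))`. -/
theorem domega_eq_theta {n : ℕ}
    (L : E n → ℝ) (hL : ContDiff ℝ (⊤ : ℕ∞) L)
    (ginv : E n → Fin n → Fin n → ℝ)
    (hginv : ∀ u k i, ∑ j, ginv u k j * hess L u j i = if k = i then (1 : ℝ) else 0)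
    (hginv' : ∀ u k i, ∑ j, hess L u k j * ginv u j i = if k = i then (1 : ℝ) else 0)
    (hginvsm : ∀ k i, ContDiff ℝ (⊤ : ℕ∞) fun u => ginv u k i) :
    ∀ (u : E n) (X Y : E n),
      fderiv ℝ (fun w => omega1 L w Y) u X - fderiv ℝ (fun w => omega1 L w X) u Y
        = theta2 L ginv u X Y := by
  intro u X Y
  rw [lhs_eq hL u X Y, lhs_eq hL u Y X]
  exact alg_main (fun i j => hess L u i j) (fun k i => pdx k (pdy i L) u)
    (fun i k => Ncan L ginv i k u)
    (fun k j => ∑ i, hess L u i j * Ncan L ginv i k u)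
    X.1 X.2 Y.1 Y.2 (fun k j => rfl)
    (fun k j => M_antisymm hL hginv' hginvsm u k j)
end
end

section
/- Suppose r ∈ W ⊗ Λ solves the Fedosov equation δr = T + R + Dr − (i/v) r ∘ r with δ⁻¹ r = 0 and deg_a(r) = 1, where D satisfies [D, δ] = (i/v) ad(T) and D² = −(i/v) ad(R), with δT = 0 and δR = DT. Then the operator 𝒟 := −δ + D − (i/v) ad(r) satisfies 𝒟² = 0, where ad(s)(a) = s∘a − (−1)^{deg_a(s)deg_a(a)} a∘s is the graded commutator in (W ⊗ Λ, ∘). -/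
/-!
Write `𝒟 = -δ + D - c • A` with `A = ad r`. Since `δ`, `D`, `A` are odd operators, `𝒟²` is a
combination of the supercommutators `δ² = 0`, `[D, δ] = c ad T`, `D² = -c ad R`,
`[δ, A] = ad (δ r)`, `[D, A] = ad (D r)` and `A² = ad (r * r)` (the last three because `r` is odd).
Hence `𝒟² = c ad (δ r - T - R - D r + c r²)`, and the argument of `ad` vanishes by the
Fedosov equation.
-/

noncomputable section

theorem neg_add_sub_smul_mul_self_eq {K E : Type*} [CommRing K] [Ring E] [Module K E]
    [IsScalarTower K E E] [SMulCommClass K E E] {δ D A X Y Z₁ Z₂ S : E} {c : K}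
    (hδ2 : δ * δ = 0) (hDδ : D * δ + δ * D = c • X) (hD2 : D * D = -(c • Y))
    (hδA : δ * A + A * δ = Z₁) (hDA : D * A + A * D = Z₂) (hA2 : A * A = S) :
    (-δ + D - c • A) * (-δ + D - c • A) = c • (Z₁ - X - Y - Z₂ + c • S) := by
  have expand : (-δ + D - c • A) * (-δ + D - c • A) =
      δ * δ - (D * δ + δ * D) + D * D + c • (δ * A + A * δ) - c • (D * A + A * D)
        + (c * c) • (A * A) := by
    simp only [mul_add, add_mul, mul_sub, sub_mul, neg_mul, mul_neg, smul_mul_assoc,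
      mul_smul_comm]
    module
  rw [expand, hδ2, hDδ, hD2, hδA, hDA, hA2]
  module

section GradedAd

variable {K W : Type*} [CommRing K] [Ring W] [Algebra K W]

variable (K) in
def evenAd : W →ₗ[K] Module.End K W :=
  LinearMap.mul K W - (LinearMap.mul K W).flip

theorem evenAd_apply (s a : W) : evenAd K s a = s * a - a * s := rfl

def oddAd (P : W →ₗ[K] W) (r : W) : Module.End K W :=
  LinearMap.mulLeft K r - LinearMap.mulRight K r ∘ₗ P

theorem oddAd_apply (P : W →ₗ[K] W) (r a : W) : oddAd P r a = r * a - P a * r := rfl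

variable {P : W →ₗ[K] W} {r : W}

theorem oddAd_mul_self (hPmul : ∀ a b : W, P (a * b) = P a * P b) (hP2 : ∀ a : W, P (P a) = a)
    (hr : P r = -r) : oddAd P r * oddAd P r = evenAd K (r * r) := by
  ext a
  simp only [Module.End.mul_apply, oddAd_apply, evenAd_apply, map_sub, hPmul, hP2, hr, neg_mul,
    mul_neg, mul_assoc]
  abel

theorem mul_oddAd_add_oddAd_mul {d : Module.End K W} (hP2 : ∀ a : W, P (P a) = a)
    (hder : ∀ a b : W, d (a * b) = d a * b + P a * d b) (hdP : ∀ a : W, d (P a) = -P (d a))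
    (hr : P r = -r) : d * oddAd P r + oddAd P r * d = evenAd K (d r) := by
  ext a
  simp only [LinearMap.add_apply, Module.End.mul_apply, oddAd_apply, evenAd_apply, map_sub,
    hder, hdP, hP2, hr, neg_mul]
  abel

end GradedAd

/-- `W` plays `W ⊗ Λ` over `K = ℂ[[v]][v⁻¹]`, `P` is the parity `(−1)^{deg_a}`, `c` is `i/v`,
and `r * a - P a * r` is `ad(r)(a)` for the odd element `r`. -/
theorem fedosov_connection_flat_general
    {K W : Type*} [CommRing K] [Ring W] [Algebra K W]
    (P : W →ₗ[K] W)
    (hPmul : ∀ a b : W, P (a * b) = P a * P b)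
    (hP2 : ∀ a : W, P (P a) = a)
    (δ D : W →ₗ[K] W)
    -- `δ`, `D` are odd (degree +1) graded derivations:
    (hδder : ∀ a b : W, δ (a * b) = δ a * b + P a * δ b)
    (hDder : ∀ a b : W, D (a * b) = D a * b + P a * D b)
    (hδP : ∀ a : W, δ (P a) = -P (δ a))
    (hDP : ∀ a : W, D (P a) = -P (D a))
    (c : K)
    (T R r : W)
    (hPr : P r = -r)
    (hδ2 : ∀ a : W, δ (δ a) = 0)
    -- `[D, δ] = (i/v) ad(T)`:
    (hDδ : ∀ a : W, D (δ a) + δ (D a) = c • (T * a - a * T))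
    -- `D² = −(i/v) ad(R)`:
    (hD2 : ∀ a : W, D (D a) = -(c • (R * a - a * R)))
    -- the Fedosov equation:
    (hfed : δ r = T + R + D r - c • (r * r)) :
    ∀ a : W,
      (fun x => -δ x + D x - c • (r * x - P x * r))
        ((fun x => -δ x + D x - c • (r * x - P x * r)) a) = 0 := by
  have hfed' : δ r - T - R - D r + c • (r * r) = 0 := by rw [hfed]; abel
  have flat : (-δ + D - c • oddAd P r) * (-δ + D - c • oddAd P r) = 0 := by
    rw [neg_add_sub_smul_mul_self_eq (K := K) (LinearMap.ext hδ2)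
      (show D * δ + δ * D = c • evenAd K T from LinearMap.ext hDδ)
      (show D * D = -(c • evenAd K R) from LinearMap.ext hD2)
      (mul_oddAd_add_oddAd_mul hP2 hδder hδP hPr) (mul_oddAd_add_oddAd_mul hP2 hDder hDP hPr)
      (oddAd_mul_self hPmul hP2 hPr), ← map_smul, ← map_sub, ← map_sub, ← map_sub, ← map_add,
      hfed', map_zero, smul_zero]
  exact LinearMap.congr_fun flat

/-- Fedosov's flatness computation, abstractly.  `W` is the graded algebra `W ⊗ Λ` over
the scalars `K` (playing `ℂ[[v]][v⁻¹]`), with parity automorphism `P = (−1)^{deg_a}`;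
`δ` and `D` are odd graded derivations; `c` plays `i/v`; `T`, `R` have degree 2 (even),
`r` degree 1 (odd).  The graded adjoint action of the odd element `r` is
`ad(r)(a) = r∘a − (−1)^{deg_a(a)} a∘r = r*a − P(a)*r`.  If `r` solves the Fedosov
equation `δr = T + R + Dr − (i/v) r∘r`, then
`𝒟 := −δ + D − (i/v) ad(r)` satisfies `𝒟² = 0`. -/
theorem fedosov_connection_flat
    {K W : Type*} [CommRing K] [Ring W] [Algebra K W]
    (P : W →ₗ[K] W)
    (hPmul : ∀ a b : W, P (a * b) = P a * P b)
    (hP2 : ∀ a : W, P (P a) = a)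
    (δ D : W →ₗ[K] W)
    -- `δ`, `D` are odd (degree +1) graded derivations:
    (hδder : ∀ a b : W, δ (a * b) = δ a * b + P a * δ b)
    (hDder : ∀ a b : W, D (a * b) = D a * b + P a * D b)
    (hδP : ∀ a : W, δ (P a) = -P (δ a))
    (hDP : ∀ a : W, D (P a) = -P (D a))
    (c : K)
    (T R r : W)
    (hPT : P T = T) (hPR : P R = R) (hPr : P r = -r)
    (hδ2 : ∀ a : W, δ (δ a) = 0)
    (hδT : δ T = 0)
    (hδR : δ R = D T)
    (hDR : D R = 0)
    -- `[D, δ] = (i/v) ad(T)`: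
    (hDδ : ∀ a : W, D (δ a) + δ (D a) = c • (T * a - a * T))
    -- `D² = −(i/v) ad(R)`:
    (hD2 : ∀ a : W, D (D a) = -(c • (R * a - a * R)))
    -- the Fedosov equation:
    (hfed : δ r = T + R + D r - c • (r * r)) :
    ∀ a : W,
      (fun x => -δ x + D x - c • (r * x - P x * r))
        ((fun x => -δ x + D x - c • (r * x - P x * r)) a) = 0 :=
  fedosov_connection_flat_general P hPmul hP2 δ D hδder hDder hδP hDP c T R r hPr hδ2 hDδ hD2 hfed
end
end
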